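/- Let C be a Cartan scheme and (R^a)_{a∈A} a root system of type C. Let i, j ∈ I with i ≠ j and set i_{2n+1} = i, i_{2n} = j for all n ∈ ℤ. Let a ∈ A, m, r ∈ ℕ₀, and let w = σ_{i_m}^{a_m} ∘ ⋯ ∘ σ_{i_2}^{a_2} ∘ σ_{i_1}^{a_1} ∈ Aut(ℤ^I), where a_1 = a and a_{k+1} = r_{i_k}(a_k). If w(ε_i + r ε_j) = ε_{i_{m+1}}, then there exists t ∈ ℕ₀ such that w(ε_j) = ε_{i_m} + t ε_{i_{m+1}}. -/
import Mathlib


variable {I : Type*} [Fintype I] [DecidableEq I]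

/-- The standard basis vector `ε_i` of `ℤ^I`. -/
def eps (i : I) : I → ℤ := Pi.single i 1

/-- The reflection `σ_i ∈ Aut(ℤ^I)` attached to a row `c i ·` of a generalized
Cartan matrix: `σ_i(ε_j) = ε_j − c_{ij} ε_i`. -/
def sigmaMat (c : I → I → ℤ) (i : I) (x : I → ℤ) : I → ℤ :=
  x - (∑ j, c i j * x j) • eps i

/-- The alternating index sequence: `i_n = i` for `n` odd, `i_n = j` for `n` even. -/
def altIdx (i j : I) (n : ℕ) : I := if n % 2 = 1 then i else j

/-- The sequence of objects: `aSeq k = a_{k+1}`, where `a_1 = a` and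
`a_{k+1} = r_{i_k}(a_k)`. -/
def aSeq {A : Type*} (r : I → A → A) (i j : I) (a : A) : ℕ → A
  | 0 => a
  | k + 1 => r (altIdx i j (k + 1)) (aSeq r i j a k)

/-- `wSeq m = σ_{i_m}^{a_m} ∘ ⋯ ∘ σ_{i_2}^{a_2} ∘ σ_{i_1}^{a_1}`. -/
def wSeq {A : Type*} (r : I → A → A) (C : A → I → I → ℤ) (i j : I) (a : A) :
    ℕ → (I → ℤ) → (I → ℤ)
  | 0 => id
  | k + 1 => sigmaMat (C (aSeq r i j a k)) (altIdx i j (k + 1)) ∘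
      wSeq r C i j a k

lemma eps_apply (i k : I) : eps i k = if k = i then 1 else 0 := by
  simp [eps, Pi.single_apply]

lemma eps_self (i : I) : eps i i = 1 := by simp [eps_apply]

lemma eps_ne {i k : I} (h : k ≠ i) : eps i k = 0 := by simp [eps_apply, h]

def InSpan (i j : I) (x : I → ℤ) : Prop := ∀ k, k ≠ i → k ≠ j → x k = 0

def d2 (i j : I) (x y : I → ℤ) : ℤ := x i * y j - x j * y i

lemma sigmaMat_apply (c : I → I → ℤ) (p : I) (x : I → ℤ) (k : I) :
    sigmaMat c p x k = x k - (∑ l, c p l * x l) * eps p k := by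
  simp [sigmaMat]

lemma sum_span {i j : I} (hij : i ≠ j) (c : I → ℤ) {x : I → ℤ}
    (hx : InSpan i j x) : ∑ l, c l * x l = c i * x i + c j * x j := by
  rw [← Finset.sum_subset (Finset.subset_univ ({i, j} : Finset I))]
  · rw [Finset.sum_pair hij]
  · intro k _ hk
    simp only [Finset.mem_insert, Finset.mem_singleton] at hk
    push_neg at hk
    rw [hx k hk.1 hk.2, mul_zero]

lemma sigmaMat_inSpan {i j p : I} (hp : p = i ∨ p = j) (c : I → I → ℤ)
    {x : I → ℤ} (hx : InSpan i j x) : InSpan i j (sigmaMat c p x) := by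
  intro k hki hkj
  rw [sigmaMat_apply, hx k hki hkj, eps_ne, mul_zero, sub_zero]
  rcases hp with h | h <;> rw [h] <;> assumption

lemma sigmaMat_d2 {i j p : I} (hij : i ≠ j) (hp : p = i ∨ p = j)
    (c : I → I → ℤ) (hcc : c p p = 2) {x y : I → ℤ}
    (hx : InSpan i j x) (hy : InSpan i j y) :
    d2 i j (sigmaMat c p x) (sigmaMat c p y) = - d2 i j x y := by
  have hsx := sum_span hij (c p) hx
  have hsy := sum_span hij (c p) hy
  rcases hp with rfl | rfl
  · simp only [d2, sigmaMat_apply, hsx, hsy, eps_self, eps_ne hij.symm] at *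
    rw [hcc] at *
    ring
  · simp only [d2, sigmaMat_apply, hsx, hsy, eps_self, eps_ne hij] at *
    rw [hcc] at *
    ring

lemma altIdx_mem (i j : I) (n : ℕ) : altIdx i j n = i ∨ altIdx i j n = j := by
  unfold altIdx; split <;> simp

lemma wSeq_inSpan {A : Type*} (r : I → A → A) (C : A → I → I → ℤ) {i j : I}
    (a : A) {x : I → ℤ} (hx : InSpan i j x) (m : ℕ) :
    InSpan i j (wSeq r C i j a m x) := by
  induction m with
  | zero => exact hx
  | succ k ih => exact sigmaMat_inSpan (altIdx_mem i j (k+1)) _ ih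

lemma wSeq_d2 {A : Type*} (r : I → A → A) (C : A → I → I → ℤ)
    (hC1 : ∀ a i, C a i i = 2) {i j : I} (hij : i ≠ j) (a : A)
    {x y : I → ℤ} (hx : InSpan i j x) (hy : InSpan i j y) (m : ℕ) :
    d2 i j (wSeq r C i j a m x) (wSeq r C i j a m y) = (-1)^m * d2 i j x y := by
  induction m with
  | zero => simp [wSeq]
  | succ k ih =>
    have h2 : d2 i j (wSeq r C i j a (k+1) x) (wSeq r C i j a (k+1) y)
        = - d2 i j (wSeq r C i j a k x) (wSeq r C i j a k y) :=
      sigmaMat_d2 hij (altIdx_mem i j (k+1)) (C (aSeq r i j a k))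
        (hC1 _ _) (wSeq_inSpan r C a hx k) (wSeq_inSpan r C a hy k)
    rw [h2, ih, pow_succ]
    ring

lemma wSeq_mem {A : Type*} (r : I → A → A) (C : A → I → I → ℤ)
    (R : A → Set (I → ℤ))
    (hR3 : ∀ a i, sigmaMat (C a) i '' R a = R (r i a)) (i j : I) (a : A)
    {x : I → ℤ} (hx : x ∈ R a) (m : ℕ) :
    wSeq r C i j a m x ∈ R (aSeq r i j a m) := by
  induction m with
  | zero => exact hx
  | succ k ih =>
    have : wSeq r C i j a (k+1) x ∈
        sigmaMat (C (aSeq r i j a k)) (altIdx i j (k+1)) '' R (aSeq r i j a k) :=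
      ⟨_, ih, rfl⟩
    rw [hR3] at this
    exact this

/-- Lemma (le:Coxeterkey): with `w = σ_{i_m}^{a_m} ⋯ σ_{i_1}^{a_1}`, if
`w(ε_i + r ε_j) = ε_{i_{m+1}}`, then `w(ε_j) = ε_{i_m} + t ε_{i_{m+1}}`
for some `t ∈ ℕ₀`. -/
theorem coxeter_key {A : Type*} [Nonempty A]
    (r : I → A → A) (C : A → I → I → ℤ) (R : A → Set (I → ℤ))
    -- Cartan scheme axioms
    (hr : ∀ i a, r i (r i a) = a)
    (hC1 : ∀ a i, C a i i = 2)
    (hC2 : ∀ a i j, i ≠ j → C a i j ≤ 0)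
    (hC3 : ∀ a i j, C a i j = 0 → C a j i = 0)
    (hCr : ∀ a i j, C a i j = C (r i a) i j)
    -- root system axioms
    (hR1 : ∀ a x, x ∈ R a ↔
      (x ∈ R a ∧ ∀ i, 0 ≤ x i) ∨ (-x ∈ R a ∧ ∀ i, 0 ≤ -x i))
    (hR2 : ∀ a i, {x | x ∈ R a ∧ ∃ n : ℤ, x = n • eps i} = {eps i, -eps i})
    (hR3 : ∀ a i, sigmaMat (C a) i '' R a = R (r i a))
    (hR4 : ∀ a i j, i ≠ j →
      (R a ∩ {x | ∃ m n : ℕ, x = (m : ℤ) • eps i + (n : ℤ) • eps j}).Finite →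
      (fun b => r i (r j b))^[(R a ∩
        {x | ∃ m n : ℕ, x = (m : ℤ) • eps i + (n : ℤ) • eps j}).ncard] a = a)
    (i j : I) (hij : i ≠ j) (a : A) (m rr : ℕ)
    (hw : wSeq r C i j a m (eps i + (rr : ℤ) • eps j) = eps (altIdx i j (m + 1))) :
    ∃ t : ℕ, wSeq r C i j a m (eps j) =
      eps (altIdx i j m) + (t : ℤ) • eps (altIdx i j (m + 1)) := by
  have hεj : eps j ∈ R a := by
    have h2 : eps j ∈ {x | x ∈ R a ∧ ∃ n : ℤ, x = n • eps j} := by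
      rw [hR2 a j]; left; rfl
    exact h2.1
  have hvmem : wSeq r C i j a m (eps j) ∈ R (aSeq r i j a m) :=
    wSeq_mem r C R hR3 i j a hεj m
  have hx_span : InSpan i j (eps i + (rr : ℤ) • eps j) := by
    intro k hki hkj
    simp [eps_ne hki, eps_ne hkj]
  have hy_span : InSpan i j (eps j) := fun k _ hkj => eps_ne hkj
  have hv_span : InSpan i j (wSeq r C i j a m (eps j)) :=
    wSeq_inSpan r C a hy_span m
  have hd1 : d2 i j (eps i + (rr : ℤ) • eps j) (eps j) = 1 := by
    simp [d2, eps_self, eps_ne hij, eps_ne hij.symm]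
  have hd : d2 i j (eps (altIdx i j (m+1))) (wSeq r C i j a m (eps j))
      = (-1 : ℤ)^m := by
    rw [← hw, wSeq_d2 r C hC1 hij a hx_span hy_span m, hd1, mul_one]
  have hpos : (∀ k, 0 ≤ wSeq r C i j a m (eps j) k) ∨
      (∀ k, 0 ≤ -(wSeq r C i j a m (eps j)) k) := by
    rcases (hR1 _ _).1 hvmem with h | h
    · exact Or.inl h.2
    · exact Or.inr h.2
  rcases Nat.even_or_odd m with he | ho
  · -- m even : altIdx (m+1) = i, altIdx m = j
    have hm2 : m % 2 = 0 := Nat.even_iff.mp he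
    have h1 : altIdx i j (m+1) = i := by
      have : (m+1) % 2 = 1 := by omega
      simp [altIdx, this]
    have h0 : altIdx i j m = j := by simp [altIdx, hm2]
    have hvj : wSeq r C i j a m (eps j) j = 1 := by
      have h3 := hd
      rw [h1, Even.neg_one_pow he] at h3
      simpa [d2, eps_self, eps_ne hij.symm] using h3
    have hvi : 0 ≤ wSeq r C i j a m (eps j) i := by
      rcases hpos with h | h
      · exact h i
      · have := h j; rw [hvj] at this; omega
    refine ⟨(wSeq r C i j a m (eps j) i).toNat, ?_⟩
    rw [h0, h1]
    funext k
    by_cases hki : k = i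
    · subst hki
      simp [eps_self, eps_ne hij, Int.toNat_of_nonneg hvi]
    · by_cases hkj : k = j
      · subst hkj
        simp [eps_self, eps_ne hij.symm, hvj]
      · simp [eps_ne hki, eps_ne hkj, hv_span k hki hkj]
  · -- m odd : altIdx (m+1) = j, altIdx m = i
    have hm2 : m % 2 = 1 := Nat.odd_iff.mp ho
    have h1 : altIdx i j (m+1) = j := by
      have : (m+1) % 2 ≠ 1 := by omega
      simp [altIdx, this]
    have h0 : altIdx i j m = i := by simp [altIdx, hm2]
    have hvi : wSeq r C i j a m (eps j) i = 1 := by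
      have h3 := hd
      rw [h1, Odd.neg_one_pow ho] at h3
      have h4 : -(wSeq r C i j a m (eps j) i) = -1 := by
        simpa [d2, eps_self, eps_ne hij] using h3
      omega
    have hvj : 0 ≤ wSeq r C i j a m (eps j) j := by
      rcases hpos with h | h
      · exact h j
      · have := h i; rw [hvi] at this; omega
    refine ⟨(wSeq r C i j a m (eps j) j).toNat, ?_⟩
    rw [h0, h1]
    funext k
    by_cases hki : k = i
    · subst hki
      simp [eps_self, eps_ne hij, hvi]
    · by_cases hkj : k = j
      · subst hkj
        simp [eps_self, eps_ne hij.symm, Int.toNat_of_nonneg hvj]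
      · simp [eps_ne hki, eps_ne hkj, hv_span k hki hkj]
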